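/- Let A be an m×n real matrix whose columns have ℓ2-norm 1, let 1 ≤ a ≤ s be integers with 2s−1 ≤ n−1, and set C_{a,s} = √((2s−a)/a). Assume μ₁(A, a−1) + C_{a,s}·μ₁(A, 2s−1) < 1. Let x ∈ ℝ^n, b = Ax + z with ‖Aᵀz‖_∞ ≤ η for some η ≥ 0, and let x̂ be a minimizer of ‖y‖₁ over all y ∈ ℝ^n with ‖Aᵀ(b − Ay)‖_∞ ≤ η (the Dantzig selector). Then ‖x̂ − x‖₂ ≤ [2√2·√s / (1 − μ₁(A,a−1) − C_{a,s}·μ₁(A,2s−1))]·η + [ (√2·(s/a)·μ₁(A,2s−1)) / ((1 − μ₁(A,a−1) − C_{a,s}·μ₁(A,2s−1))·C_{a,s}) + 1 ]·(2‖x_{−max(s)}‖₁/√s). -/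

import Mathlib

/-!
Write `h = x̂ - x`. Since `x` is feasible, minimality of `‖x̂‖₁` puts `h` in the cone
`‖h_{Sᶜ}‖₁ ≤ ‖h_S‖₁ + 2 ‖x_{Sᶜ}‖₁`, and since both points are feasible, `‖AᵀA h‖_∞ ≤ 2η`.
Let `V` carry the `a` largest entries of `|h|`. Expanding
`(AᵀA h)_i = h_i + ∑_{j ≠ i} ⟨A_i, A_j⟩ h_j` for `i ∈ V` bounds `‖h_V‖₂²` by `2η ‖h_V‖₁`,
plus the coupling inside `V`, at most `μ₁(a-1) ‖h_V‖₂²` by AM-GM, plus the coupling between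
`V` and `Vᶜ`. The entries of `h` off `V` are at most some `θ` and have mass at most
`(2s - a) θ`; as the latter coupling is linear in these entries, it is at most `θ` times the
coupling of `V` with some `2s - a` indices, hence at most `μ₁(2s-1) θ ‖h_V‖₁`. The resulting
bound on `‖h_V‖₂` extends to `‖h‖₂` through the cone condition.
-/

open scoped Classical

/-- Cumulative coherence function μ₁(A, s). -/
noncomputable def mu1 {m n : ℕ} (A : Matrix (Fin m) (Fin n) ℝ) (s : ℕ) : ℝ :=
  sSup {t : ℝ | ∃ S : Finset (Fin n), S.card ≤ s ∧ ∃ i : Fin n, i ∉ S ∧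
    t = ∑ j ∈ S, |∑ k : Fin m, A k i * A k j|}

open Finset
open scoped Matrix

theorem exists_card_le_sum_mul_le_mul_sum {ι : Type*} [DecidableEq ι] (r : ℕ) (J : Finset ι)
    (w γ : ι → ℝ) (θ : ℝ) (hw : ∀ j ∈ J, 0 ≤ w j) (hwθ : ∀ j ∈ J, w j ≤ θ)
    (hγ : ∀ j ∈ J, 0 ≤ γ j) (hsum : ∑ j ∈ J, w j ≤ r * θ) :
    ∃ F ⊆ J, #F ≤ r ∧ ∑ j ∈ J, w j * γ j ≤ θ * ∑ j ∈ F, γ j := by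
  induction r generalizing J w with
  | zero =>
    have hw0 : ∀ j ∈ J, w j = 0 :=
      (sum_eq_zero_iff_of_nonneg hw).1 (le_antisymm (by simpa using hsum) (sum_nonneg hw))
    refine ⟨∅, empty_subset _, by simp, ?_⟩
    rw [sum_eq_zero fun j hj => by rw [hw0 j hj, zero_mul]]
    simp
  | succ r ih =>
    rcases J.eq_empty_or_nonempty with rfl | hJ
    · exact ⟨∅, empty_subset _, by simp, by simp⟩
    obtain ⟨j₀, hj₀, hmax⟩ := J.exists_max_image γ hJ
    set J' := J.erase j₀
    have hJ' : J' ⊆ J := erase_subset _ _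
    have hsplit (f : ι → ℝ) : ∑ j ∈ J, f j = ∑ j ∈ J', f j + f j₀ :=
      (sum_erase_add J f hj₀).symm
    have hθ : 0 ≤ θ := (hw j₀ hj₀).trans (hwθ j₀ hj₀)
    set σ := ∑ j ∈ J', w j
    have hσ : σ + w j₀ ≤ (r + 1) * θ := by rw [← hsplit]; exact_mod_cast hsum
    -- Rescale the weights on `J'` to mass at most `r θ`; the surplus is charged to `j₀`,
    -- where `γ` is largest.
    set c := if r * θ < σ then r * θ / σ else 1
    obtain ⟨hc0, hc1, hcσ, hsurplus⟩ :
        0 ≤ c ∧ c ≤ 1 ∧ c * σ ≤ r * θ ∧ (1 - c) * σ ≤ θ - w j₀ := by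
      unfold c
      split_ifs with hlt
      · have hσ0 : 0 < σ := lt_of_le_of_lt (by positivity) hlt
        refine ⟨by positivity, (div_le_one hσ0).2 hlt.le, (div_mul_cancel₀ _ hσ0.ne').le, ?_⟩
        rw [sub_mul, div_mul_cancel₀ _ hσ0.ne', one_mul]
        linarith
      · exact ⟨zero_le_one, le_rfl, by simpa using not_lt.1 hlt, by simpa using hwθ j₀ hj₀⟩
    obtain ⟨F, hF, hFcard, hFsum⟩ := ih J' (fun j => c * w j)
      (fun j hj => mul_nonneg hc0 (hw j (hJ' hj)))
      (fun j hj => by nlinarith [hw j (hJ' hj), hwθ j (hJ' hj)]) (fun j hj => hγ j (hJ' hj))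
      (by rw [← mul_sum]; exact hcσ)
    have hrest : (1 - c) * ∑ j ∈ J', w j * γ j ≤ (1 - c) * σ * γ j₀ := by
      rw [mul_assoc, sum_mul]
      gcongr with j hj
      · exact hw j (hJ' hj)
      · exact hmax j (hJ' hj)
    refine ⟨insert j₀ F, insert_subset hj₀ (hF.trans hJ'),
      (card_insert_le _ _).trans (by omega), ?_⟩
    rw [sum_insert fun hj₀F => notMem_erase j₀ J (hF hj₀F), hsplit]
    have : ∑ j ∈ J', w j * γ j = ∑ j ∈ J', c * w j * γ j + (1 - c) * ∑ j ∈ J', w j * γ j := by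
      rw [mul_sum, ← sum_add_distrib]; exact sum_congr rfl fun j _ => by ring
    nlinarith [hγ j₀ hj₀]

theorem exists_card_eq_forall_le_of_mem_of_notMem {ι : Type*} [Fintype ι] [DecidableEq ι]
    (w : ι → ℝ) {k : ℕ} (hk : k ≤ Fintype.card ι) :
    ∃ V : Finset ι, #V = k ∧ ∀ i ∈ V, ∀ j ∉ V, w j ≤ w i := by
  induction k with
  | zero => exact ⟨∅, rfl, by simp⟩
  | succ k ih =>
    obtain ⟨V, hV, hVtop⟩ := ih (by omega)
    have hVc : Vᶜ.Nonempty := by rw [← card_pos, card_compl, hV]; omega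
    obtain ⟨j₀, hj₀, hmax⟩ := exists_max_image Vᶜ w hVc
    have hj₀V : j₀ ∉ V := mem_compl.1 hj₀
    refine ⟨insert j₀ V, by rw [card_insert_of_notMem hj₀V, hV], fun i hi j hj => ?_⟩
    have hjV : j ∉ V := fun h => hj (mem_insert_of_mem h)
    rcases mem_insert.1 hi with rfl | hi
    · exact hmax j (mem_compl.2 hjV)
    · exact hVtop i hi j hjV

theorem exists_card_eq_threshold {ι : Type*} [Fintype ι] [DecidableEq ι] {w : ι → ℝ}
    (hw : ∀ i, 0 ≤ w i) {k : ℕ} (hk0 : 0 < k) (hk : k ≤ Fintype.card ι) :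
    ∃ V : Finset ι, ∃ c, #V = k ∧ 0 ≤ c ∧ (∀ i ∈ V, c ≤ w i) ∧ ∀ j ∉ V, w j ≤ c := by
  obtain ⟨V, hV, hVtop⟩ := exists_card_eq_forall_le_of_mem_of_notMem w hk
  have hVne : V.Nonempty := card_pos.1 (hV ▸ hk0)
  exact ⟨V, V.inf' hVne w, hV, le_inf' _ _ fun i _ => hw i, fun i hi => inf'_le _ hi,
    fun j hj => le_inf' _ _ fun i hi => hVtop i hi j hj⟩

theorem sum_le_sum_add_card_sub_mul {ι : Type*} [DecidableEq ι] (w : ι → ℝ) (S V : Finset ι)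
    (c : ℝ) (hV : ∀ i ∈ V, c ≤ w i) (hVc : ∀ j ∈ S, j ∉ V → w j ≤ c) :
    ∑ i ∈ S, w i ≤ ∑ i ∈ V, w i + (#S - #V : ℝ) * c := by
  have hSV : ∑ i ∈ S \ V, w i ≤ #(S \ V) * c := by
    simpa using sum_le_sum fun j hj => hVc j (mem_sdiff.1 hj).1 (mem_sdiff.1 hj).2
  have hVS : #(V \ S) * c ≤ ∑ i ∈ V \ S, w i := by
    simpa using sum_le_sum fun i hi => hV i (mem_sdiff.1 hi).1
  have hS := card_sdiff_add_card_inter S V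
  have hV := card_sdiff_add_card_inter V S
  rw [inter_comm] at hV
  rw [← sum_inter_add_sum_sdiff S V, ← sum_inter_add_sum_sdiff V S, inter_comm V S,
    ← hS, ← hV]
  push_cast
  linarith

theorem sum_compl_abs_sub_le {ι : Type*} [Fintype ι] [DecidableEq ι] {x y : ι → ℝ}
    (hxy : ∑ i, |y i| ≤ ∑ i, |x i|) (S : Finset ι) :
    ∑ i ∈ Sᶜ, |y i - x i| ≤ ∑ i ∈ S, |y i - x i| + 2 * ∑ i ∈ Sᶜ, |x i| := by
  have hS : ∑ i ∈ S, |x i| ≤ ∑ i ∈ S, |y i| + ∑ i ∈ S, |y i - x i| := by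
    rw [← sum_add_distrib]
    exact sum_le_sum fun i _ => by
      have := abs_sub_abs_le_abs_sub (x i) (y i); rw [abs_sub_comm] at this; linarith
  have hSc : ∑ i ∈ Sᶜ, |y i - x i| ≤ ∑ i ∈ Sᶜ, |y i| + ∑ i ∈ Sᶜ, |x i| := by
    rw [← sum_add_distrib]
    exact sum_le_sum fun i _ => abs_sub _ _
  rw [← sum_add_sum_compl S, ← sum_add_sum_compl S (fun i => |x i|)] at hxy
  linarith

section Threshold

variable {ι : Type*} {h : ι → ℝ} {V : Finset ι} {c : ℝ}

theorem sum_compl_abs_le_of_cone [Fintype ι] [DecidableEq ι] {S : Finset ι} {t : ℝ}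
    (hcV : ∀ i ∈ V, c ≤ |h i|) (hcVc : ∀ j ∉ V, |h j| ≤ c)
    (hcone : ∑ i ∈ Sᶜ, |h i| ≤ ∑ i ∈ S, |h i| + 2 * t) :
    ∑ j ∈ Vᶜ, |h j| ≤ ∑ i ∈ V, |h i| + 2 * (#S - #V : ℝ) * c + 2 * t := by
  have hS := sum_le_sum_add_card_sub_mul (fun i => |h i|) S V c hcV fun j _ hj => hcVc j hj
  have htotal := (sum_add_sum_compl S fun i => |h i|).trans (sum_add_sum_compl V _).symm
  linarith

theorem mul_sum_abs_le_sum_sq (hcV : ∀ i ∈ V, c ≤ |h i|) :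
    c * ∑ i ∈ V, |h i| ≤ ∑ i ∈ V, h i ^ 2 := by
  rw [mul_sum]
  gcongr with i hi
  rw [← sq_abs, sq]
  exact mul_le_mul_of_nonneg_right (hcV i hi) (abs_nonneg _)

theorem card_mul_sq_le_sum_sq (hc0 : 0 ≤ c) (hcV : ∀ i ∈ V, c ≤ |h i|) :
    #V * c ^ 2 ≤ ∑ i ∈ V, h i ^ 2 := by
  rw [← nsmul_eq_mul, ← sum_const]
  refine sum_le_sum fun i hi => ?_
  rw [← sq_abs (h i)]
  exact pow_le_pow_left₀ hc0 (hcV i hi) 2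

theorem sq_sum_abs_le_card_mul_sum_sq : (∑ i ∈ V, |h i|) ^ 2 ≤ #V * ∑ i ∈ V, h i ^ 2 := by
  simpa only [sq_abs] using sq_sum_le_card_mul_sum_sq (s := V) (f := fun i => |h i|)

theorem sum_sq_le_of_mul_sum_sq_le [Fintype ι] [DecidableEq ι] {a s : ℕ} (ha : 1 ≤ a)
    (has : a ≤ s) {S : Finset ι} (hS : #S = s) (hV : #V = a) {t D X : ℝ} (hc0 : 0 ≤ c)
    (hcV : ∀ i ∈ V, c ≤ |h i|) (hcVc : ∀ j ∉ V, |h j| ≤ c) (ht : 0 ≤ t)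
    (hcone : ∑ i ∈ Sᶜ, |h i| ≤ ∑ i ∈ S, |h i| + 2 * t) (hD : 0 < D) (hX : 0 ≤ X)
    (hkey : D * ∑ i ∈ V, h i ^ 2 ≤ (∑ i ∈ V, |h i|) * X) :
    ∑ i, h i ^ 2 ≤ 2 * s * (X / D) ^ 2 + 2 * t * (X / D) := by
  set P := ∑ i ∈ V, |h i|
  set E := ∑ i ∈ V, h i ^ 2
  set K := X / D
  have hK : 0 ≤ K := div_nonneg hX hD.le
  have hsa : (a : ℝ) ≤ s := by exact_mod_cast has
  have ha' : (0 : ℝ) < a := by exact_mod_cast ha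
  have hP : 0 ≤ P := sum_nonneg fun i _ => abs_nonneg _
  have hE0 : 0 ≤ E := sum_nonneg fun i _ => sq_nonneg _
  have hCS : P ^ 2 ≤ a * E := by
    simpa only [hV] using sq_sum_abs_le_card_mul_sum_sq (h := h) (V := V)
  -- Squaring `D E ≤ P X` and Cauchy–Schwarz give `D² E² ≤ a E X²`.
  have hEK : E ≤ a * K ^ 2 := by
    rcases hE0.eq_or_lt with hE | hE
    · rw [← hE]; positivity
    have hsq : (D * E) ^ 2 ≤ (P * X) ^ 2 := pow_le_pow_left₀ (by positivity) hkey 2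
    rw [div_pow, ← mul_div_assoc, le_div_iff₀ (by positivity)]
    nlinarith
  have hcK : c ≤ K := by
    have hac := card_mul_sq_le_sum_sq hc0 hcV
    rw [hV] at hac
    exact (pow_le_pow_iff_left₀ hc0 hK two_ne_zero).1 (le_of_mul_le_mul_left (by linarith) ha')
  have hQ : ∑ j ∈ Vᶜ, |h j| ≤ P + 2 * (s - a) * c + 2 * t := by
    simpa only [hS, hV] using sum_compl_abs_le_of_cone hcV hcVc hcone
  have hVc : ∑ j ∈ Vᶜ, h j ^ 2 ≤ c * ∑ j ∈ Vᶜ, |h j| := by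
    rw [mul_sum]
    refine sum_le_sum fun j hj => ?_
    rw [← sq_abs, sq]
    exact mul_le_mul_of_nonneg_right (hcVc j (mem_compl.1 hj)) (abs_nonneg _)
  have hcP : c * P ≤ E := mul_sum_abs_le_sum_sq hcV
  rw [← sum_add_sum_compl V]
  nlinarith [mul_le_mul_of_nonneg_left hQ hc0, mul_le_mul hcK hcK hc0 hK]

end Threshold

theorem one_le_sqrt_div {a b : ℝ} (ha : 0 < a) (hab : a ≤ b) : 1 ≤ √(b / a) :=
  Real.one_le_sqrt.2 ((one_le_div ha).2 hab)

theorem mul_sqrt_div_le {a b : ℝ} (ha : 0 < a) (hab : a ≤ b) : a * √(b / a) ≤ b := by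
  calc a * √(b / a) = √(a ^ 2 * (b / a)) := by
        rw [Real.sqrt_mul (sq_nonneg a), Real.sqrt_sq ha.le]
    _ = √(a * b) := by congr 1; field_simp
    _ ≤ √(b * b) := Real.sqrt_le_sqrt (by nlinarith)
    _ = b := Real.sqrt_mul_self (ha.le.trans hab)

section Coherence

variable {m n : ℕ} (A : Matrix (Fin m) (Fin n) ℝ)

theorem mu1_nonneg (s : ℕ) : 0 ≤ mu1 A s := by
  refine Real.sSup_nonneg ?_
  rintro t ⟨S, -, i, -, rfl⟩
  positivity

theorem sum_abs_gram_le_mu1 {s : ℕ} {F : Finset (Fin n)} (hF : #F ≤ s) {i : Fin n}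
    (hi : i ∉ F) :
    ∑ j ∈ F, |(Aᵀ * A) i j| ≤ mu1 A s := by
  refine le_csSup ?_ ⟨F, hF, i, hi, rfl⟩
  refine (Set.finite_range fun p : Finset (Fin n) × Fin n =>
    ∑ j ∈ p.1, |∑ k : Fin m, A k p.2 * A k j|).subset ?_ |>.bddAbove
  rintro t ⟨S, -, i, -, rfl⟩
  exact ⟨(S, i), rfl⟩

theorem gram_symm (i j : Fin n) : (Aᵀ * A) i j = (Aᵀ * A) j i := by
  simp only [Matrix.mul_apply, Matrix.transpose_apply, mul_comm]

theorem sum_sum_erase_abs_gram_mul_le {a : ℕ} {V : Finset (Fin n)} (hV : #V ≤ a)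
    (h : Fin n → ℝ) :
    ∑ i ∈ V, ∑ j ∈ V.erase i, |(Aᵀ * A) i j| * (|h i| * |h j|) ≤
      mu1 A (a - 1) * ∑ i ∈ V, h i ^ 2 := by
  -- `2 |h i| |h j| ≤ h i ^ 2 + h j ^ 2`, and the two halves agree after swapping `i` and `j`.
  have hswap : ∑ i ∈ V, ∑ j ∈ V.erase i, |(Aᵀ * A) i j| * h j ^ 2 =
      ∑ i ∈ V, ∑ j ∈ V.erase i, |(Aᵀ * A) i j| * h i ^ 2 := by
    rw [sum_comm' (s' := fun j => V.erase j) (t' := V)]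
    · simp only [gram_symm A]
    · intro i j; simp only [mem_erase]; tauto
  calc ∑ i ∈ V, ∑ j ∈ V.erase i, |(Aᵀ * A) i j| * (|h i| * |h j|)
      ≤ ∑ i ∈ V, ∑ j ∈ V.erase i, |(Aᵀ * A) i j| * ((h i ^ 2 + h j ^ 2) / 2) := by
        gcongr with i _ j _
        nlinarith [two_mul_le_add_sq |h i| |h j|, sq_abs (h i), sq_abs (h j)]
    _ = (∑ i ∈ V, ∑ j ∈ V.erase i, |(Aᵀ * A) i j| * h j ^ 2 +
          ∑ i ∈ V, ∑ j ∈ V.erase i, |(Aᵀ * A) i j| * h i ^ 2) / 2 := by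
        rw [← sum_add_distrib, sum_div]
        refine sum_congr rfl fun i _ => ?_
        rw [← sum_add_distrib, sum_div]
        exact sum_congr rfl fun j _ => by ring
    _ = ∑ i ∈ V, (∑ j ∈ V.erase i, |(Aᵀ * A) i j|) * h i ^ 2 := by
        simp only [hswap, add_self_div_two, sum_mul]
    _ ≤ ∑ i ∈ V, mu1 A (a - 1) * h i ^ 2 := by
        gcongr with i hi
        exact sum_abs_gram_le_mu1 A (by rw [card_erase_of_mem hi]; omega) (notMem_erase i V)
    _ = mu1 A (a - 1) * ∑ i ∈ V, h i ^ 2 := (mul_sum _ _ _).symm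

theorem sum_sum_compl_abs_gram_mul_le {q : ℕ} {V : Finset (Fin n)} (h : Fin n → ℝ) {θ : ℝ}
    (hθ0 : 0 ≤ θ) (hθ : ∀ j ∉ V, |h j| ≤ θ) (hmass : ∑ j ∈ Vᶜ, |h j| ≤ q * θ) :
    ∑ i ∈ V, ∑ j ∈ Vᶜ, |(Aᵀ * A) i j| * (|h i| * |h j|) ≤ mu1 A q * θ * ∑ i ∈ V, |h i| := by
  obtain ⟨F, hF, hFcard, hFsum⟩ := exists_card_le_sum_mul_le_mul_sum q Vᶜ (fun j => |h j|)
    (fun j => ∑ i ∈ V, |(Aᵀ * A) i j| * |h i|) θ (fun j _ => abs_nonneg _)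
    (fun j hj => hθ j (mem_compl.1 hj)) (fun j _ => by positivity) hmass
  calc ∑ i ∈ V, ∑ j ∈ Vᶜ, |(Aᵀ * A) i j| * (|h i| * |h j|)
      = ∑ j ∈ Vᶜ, |h j| * ∑ i ∈ V, |(Aᵀ * A) i j| * |h i| := by
        rw [sum_comm]
        exact sum_congr rfl fun j _ => by rw [mul_sum]; exact sum_congr rfl fun i _ => by ring
    _ ≤ θ * ∑ j ∈ F, ∑ i ∈ V, |(Aᵀ * A) i j| * |h i| := hFsum
    _ = θ * ∑ i ∈ V, (∑ j ∈ F, |(Aᵀ * A) i j|) * |h i| := by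
        rw [sum_comm]; simp only [sum_mul]
    _ ≤ θ * ∑ i ∈ V, mu1 A q * |h i| := by
        gcongr with i hi
        exact sum_abs_gram_le_mu1 A hFcard fun hiF => mem_compl.1 (hF hiF) hi
    _ = mu1 A q * θ * ∑ i ∈ V, |h i| := by rw [← mul_sum]; ring

variable {A}

theorem sq_le_abs_mul_abs_gram_mulVec_add (hA : ∀ j, ∑ k, A k j ^ 2 = 1) (h : Fin n → ℝ)
    {V : Finset (Fin n)} {i : Fin n} (hi : i ∈ V) :
    h i ^ 2 ≤ |h i| * |((Aᵀ * A) *ᵥ h) i| + ∑ j ∈ V.erase i, |(Aᵀ * A) i j| * (|h i| * |h j|)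
      + ∑ j ∈ Vᶜ, |(Aᵀ * A) i j| * (|h i| * |h j|) := by
  set f : Fin n → ℝ := fun j => (Aᵀ * A) i j * (h i * h j)
  have hdiag : (Aᵀ * A) i i = 1 := by simpa [Matrix.mul_apply, sq] using hA i
  have hexpand :
      h i * ((Aᵀ * A) *ᵥ h) i = h i ^ 2 + ∑ j ∈ V.erase i, f j + ∑ j ∈ Vᶜ, f j := by
    have : h i * ((Aᵀ * A) *ᵥ h) i = ∑ j, f j := by
      simp only [Matrix.mulVec, dotProduct, mul_sum, f]
      exact sum_congr rfl fun j _ => by ring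
    rw [this, ← sum_add_sum_compl V, ← add_sum_erase V f hi]
    simp only [f, hdiag]
    ring
  have habs (T : Finset (Fin n)) :
      -∑ j ∈ T, f j ≤ ∑ j ∈ T, |(Aᵀ * A) i j| * (|h i| * |h j|) := by
    rw [← sum_neg_distrib]
    exact sum_le_sum fun j _ => by simpa [f, abs_mul] using neg_le_abs (f j)
  have hres : h i * ((Aᵀ * A) *ᵥ h) i ≤ |h i| * |((Aᵀ * A) *ᵥ h) i| := by
    rw [← abs_mul]; exact le_abs_self _
  linarith [habs (V.erase i), habs Vᶜ]

theorem abs_gram_mulVec_sub_le {b : Fin m → ℝ} {η : ℝ} {y₁ y₂ : Fin n → ℝ}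
    (h₁ : ∀ i, |(Aᵀ *ᵥ (b - A *ᵥ y₁)) i| ≤ η) (h₂ : ∀ i, |(Aᵀ *ᵥ (b - A *ᵥ y₂)) i| ≤ η)
    (i : Fin n) : |((Aᵀ * A) *ᵥ (y₁ - y₂)) i| ≤ 2 * η := by
  have hdiff : (Aᵀ * A) *ᵥ (y₁ - y₂) = Aᵀ *ᵥ (b - A *ᵥ y₂) - Aᵀ *ᵥ (b - A *ᵥ y₁) := by
    rw [← Matrix.mulVec_mulVec, ← Matrix.mulVec_sub, Matrix.mulVec_sub A]
    congr 1
    abel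
  rw [hdiff, Pi.sub_apply]
  linarith [abs_sub ((Aᵀ *ᵥ (b - A *ᵥ y₂)) i) ((Aᵀ *ᵥ (b - A *ᵥ y₁)) i), h₁ i, h₂ i]

theorem sum_sq_le_of_abs_gram_mulVec_le (hA : ∀ j, ∑ k, A k j ^ 2 = 1) {a q : ℕ}
    {V : Finset (Fin n)} (hV : #V ≤ a) (h : Fin n → ℝ) {ε θ : ℝ}
    (hε : ∀ i ∈ V, |((Aᵀ * A) *ᵥ h) i| ≤ ε) (hθ0 : 0 ≤ θ) (hθ : ∀ j ∉ V, |h j| ≤ θ)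
    (hmass : ∑ j ∈ Vᶜ, |h j| ≤ q * θ) :
    ∑ i ∈ V, h i ^ 2 ≤ ε * ∑ i ∈ V, |h i| + mu1 A (a - 1) * ∑ i ∈ V, h i ^ 2 +
      mu1 A q * θ * ∑ i ∈ V, |h i| := by
  have hrow : ∑ i ∈ V, h i ^ 2 ≤ ∑ i ∈ V, (|h i| * ε +
      ∑ j ∈ V.erase i, |(Aᵀ * A) i j| * (|h i| * |h j|) +
      ∑ j ∈ Vᶜ, |(Aᵀ * A) i j| * (|h i| * |h j|)) := by
    gcongr with i hi
    refine (sq_le_abs_mul_abs_gram_mulVec_add hA h hi).trans ?_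
    gcongr
    exact hε i hi
  rw [sum_add_distrib, sum_add_distrib, ← sum_mul] at hrow
  linarith [sum_sum_erase_abs_gram_mul_le A hV h,
    sum_sum_compl_abs_gram_mul_le A h hθ0 hθ hmass]

theorem mul_sum_sq_le_of_cone (hA : ∀ j, ∑ k, A k j ^ 2 = 1) {a s : ℕ} (ha : 1 ≤ a)
    (has : a ≤ s) {h : Fin n → ℝ} {S V : Finset (Fin n)} (hS : #S = s) (hV : #V = a)
    {c t ε : ℝ} (hc0 : 0 ≤ c) (hcV : ∀ i ∈ V, c ≤ |h i|) (hcVc : ∀ j ∉ V, |h j| ≤ c)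
    (ht : 0 ≤ t) (hcone : ∑ i ∈ Sᶜ, |h i| ≤ ∑ i ∈ S, |h i| + 2 * t)
    (hε : ∀ i, |((Aᵀ * A) *ᵥ h) i| ≤ ε) :
    (1 - mu1 A (a - 1) - mu1 A (2 * s - 1)) * ∑ i ∈ V, h i ^ 2 ≤
      (∑ i ∈ V, |h i|) * (ε + 2 * mu1 A (2 * s - 1) * t / (2 * s - a)) := by
  set P := ∑ i ∈ V, |h i|
  set E := ∑ i ∈ V, h i ^ 2
  set Q := ∑ j ∈ Vᶜ, |h j|
  set r : ℝ := 2 * s - a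
  have hsa : (a : ℝ) ≤ s := by exact_mod_cast has
  have ha' : (1 : ℝ) ≤ a := by exact_mod_cast ha
  have hr : 0 < r := by linarith
  have hP : 0 ≤ P := sum_nonneg fun i _ => abs_nonneg _
  have hQ : Q ≤ P + 2 * (s - a) * c + 2 * t := by
    simpa only [hS, hV] using sum_compl_abs_le_of_cone hcV hcVc hcone
  have hCS : P ^ 2 ≤ a * E := by
    simpa only [hV] using sq_sum_abs_le_card_mul_sum_sq (h := h) (V := V)
  have hcP : c * P ≤ E := mul_sum_abs_le_sum_sq hcV
  set θ := max c (Q / r)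
  have hθ0 : 0 ≤ θ := hc0.trans (le_max_left _ _)
  have hmass : Q ≤ ((2 * s - 1 : ℕ) : ℝ) * θ := by
    calc Q = r * (Q / r) := by field_simp
      _ ≤ r * θ := by gcongr; exact le_max_right _ _
      _ ≤ ((2 * s - 1 : ℕ) : ℝ) * θ := by
        refine mul_le_mul_of_nonneg_right ?_ hθ0
        rw [Nat.cast_sub (by omega)]
        push_cast
        linarith
  have hcoh := sum_sq_le_of_abs_gram_mulVec_le hA hV.le h (fun i _ => hε i)
    hθ0 (fun j hj => (hcVc j hj).trans (le_max_left _ _)) hmass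
  -- For `θ = c` use `c P ≤ E`; for `θ = Q / r`, `P Q ≤ P² + 2 (s - a) c P + 2 t P ≤ r E + 2 t P`.
  have hPθ : P * θ ≤ E + 2 * t * P / r := by
    have hrest : 0 ≤ 2 * t * P / r := by positivity
    rw [mul_max_of_nonneg _ _ hP]
    refine max_le (by linarith) ?_
    rw [← mul_div_assoc, div_le_iff₀ hr, add_mul, div_mul_cancel₀ _ hr.ne']
    nlinarith
  have hμ := mul_le_mul_of_nonneg_left hPθ (mu1_nonneg A (2 * s - 1))
  have hexp : P * (ε + 2 * mu1 A (2 * s - 1) * t / r) =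
      ε * P + mu1 A (2 * s - 1) * (2 * t * P / r) := by ring
  rw [hexp]
  linarith

end Coherence

theorem sqrt_le_dantzig_bound {a s : ℕ} (ha : 1 ≤ a) (has : a ≤ s) {C D μ η t e : ℝ}
    (hC : C = √((2 * s - a) / a)) (hD : 0 < D) (hμ : 0 ≤ μ) (hη : 0 ≤ η) (ht : 0 ≤ t)
    (he : e ≤ 2 * s * ((2 * η + 2 * μ * t / (2 * s - a)) / D) ^ 2 +
      2 * t * ((2 * η + 2 * μ * t / (2 * s - a)) / D)) :
    √e ≤ 2 * √2 * √s / D * η + (√2 * (s / a) * μ / (D * C) + 1) * (2 * t / √s) := by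
  set K := (2 * η + 2 * μ * t / (2 * s - a)) / D
  have ha' : (0 : ℝ) < a := by exact_mod_cast ha
  have hsa : (a : ℝ) ≤ 2 * s - a := by
    have : (a : ℝ) ≤ s := by exact_mod_cast has
    linarith
  have hr : (0 : ℝ) < 2 * s - a := ha'.trans_le hsa
  have hK : 0 ≤ K := by positivity
  have hs : (0 : ℝ) < √s := Real.sqrt_pos.2 (by linarith)
  have hs2 : √(s : ℝ) ^ 2 = s := Real.sq_sqrt (by linarith)
  have h2 : (1 : ℝ) ≤ √2 := Real.one_le_sqrt.2 one_le_two
  have h22 : √(2 : ℝ) ^ 2 = 2 := Real.sq_sqrt zero_le_two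
  have hC0 : 0 < C := hC ▸ zero_lt_one.trans_le (one_le_sqrt_div ha' hsa)
  have haC : a * C ≤ 2 * s - a := hC ▸ mul_sqrt_div_le ha' hsa
  -- `e ≤ (√(2s) K + t / √(2s))²`, the extra square `t² / (2s)` being harmless.
  have hsqrt : √e ≤ √2 * √s * K + t / (√2 * √s) := by
    rw [Real.sqrt_le_left (by positivity)]
    have : (√2 * √s * K + t / (√2 * √s)) ^ 2 =
        2 * s * K ^ 2 + 2 * t * K + (t / (√2 * √s)) ^ 2 := by
      field_simp
      rw [h22, hs2]
      ring
    nlinarith [sq_nonneg (t / (√2 * √s))]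
  have hcoh : √2 * √s * (2 * μ * t / (2 * s - a)) / D ≤
      √2 * (s / a) * μ / (D * C) * (2 * t / √s) := by
    calc √2 * √s * (2 * μ * t / (2 * s - a)) / D =
          √2 * √s * 2 * μ * t / D / (2 * s - a) := by ring
      _ ≤ √2 * √s * 2 * μ * t / D / (a * C) := by gcongr
      _ = √2 * (s / a) * μ / (D * C) * (2 * t / √s) := by
        field_simp
        rw [hs2]
        ring
  have htail : t / (√2 * √s) ≤ 2 * t / √s := by
    rw [div_le_div_iff₀ (by positivity) hs]
    nlinarith [mul_le_mul_of_nonneg_left h2 (mul_nonneg ht hs.le)]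
  calc √e ≤ √2 * √s * K + t / (√2 * √s) := hsqrt
    _ = 2 * √2 * √s / D * η + √2 * √s * (2 * μ * t / (2 * s - a)) / D + t / (√2 * √s) := by
      unfold K; ring
    _ ≤ _ := by linarith

theorem stmt4_general {m n : ℕ} (A : Matrix (Fin m) (Fin n) ℝ)
    (hA : ∀ j, ∑ k, (A k j) ^ 2 = 1)
    (a s : ℕ) (ha : 1 ≤ a) (has : a ≤ s)
    (C : ℝ) (hC : C = Real.sqrt ((2 * (s : ℝ) - a) / a))
    (hcond : mu1 A (a - 1) + C * mu1 A (2 * s - 1) < 1)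
    (η : ℝ) (hη : 0 ≤ η)
    (x : Fin n → ℝ) (z : Fin m → ℝ) (b : Fin m → ℝ)
    (hb : b = A.mulVec x + z)
    (hz : ∀ i, |A.transpose.mulVec z i| ≤ η)
    (xh : Fin n → ℝ)
    (hfeas : ∀ i, |A.transpose.mulVec (b - A.mulVec xh) i| ≤ η)
    (hmin : ∀ y : Fin n → ℝ, (∀ i, |A.transpose.mulVec (b - A.mulVec y) i| ≤ η) →
      ∑ i, |xh i| ≤ ∑ i, |y i|)
    (S : Finset (Fin n)) (hScard : S.card = s) :
    Real.sqrt (∑ i, (xh i - x i) ^ 2) ≤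
      2 * Real.sqrt 2 * Real.sqrt s / (1 - mu1 A (a - 1) - C * mu1 A (2 * s - 1)) * η +
      (Real.sqrt 2 * ((s : ℝ) / a) * mu1 A (2 * s - 1) /
          ((1 - mu1 A (a - 1) - C * mu1 A (2 * s - 1)) * C) + 1) *
        (2 * (∑ j ∈ Sᶜ, |x j|) / Real.sqrt s) := by
  have hxfeas : ∀ i, |(Aᵀ *ᵥ (b - A *ᵥ x)) i| ≤ η := by simpa [hb] using hz
  have hcone := sum_compl_abs_sub_le (hmin x hxfeas) S
  obtain ⟨V, c, hV, hc0, hcV, hcVc⟩ := exists_card_eq_threshold (w := fun i => |xh i - x i|)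
    (fun _ => abs_nonneg _) ha (hScard ▸ has |>.trans (card_le_univ S))
  have ht : 0 ≤ ∑ j ∈ Sᶜ, |x j| := sum_nonneg fun j _ => abs_nonneg _
  have hμ := mu1_nonneg A (2 * s - 1)
  have hsa : (a : ℝ) ≤ 2 * s - a := by
    have : (a : ℝ) ≤ s := by exact_mod_cast has
    linarith
  have hC1 : 1 ≤ C := hC ▸ one_le_sqrt_div (by exact_mod_cast ha) hsa
  have hD : 0 < 1 - mu1 A (a - 1) - C * mu1 A (2 * s - 1) := by linarith
  have hX : 0 ≤ 2 * η + 2 * mu1 A (2 * s - 1) * (∑ j ∈ Sᶜ, |x j|) / (2 * s - a) :=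
    add_nonneg (by positivity) (div_nonneg (by positivity) ((Nat.cast_nonneg a).trans hsa))
  have hkey := mul_sum_sq_le_of_cone hA ha has hScard hV hc0 hcV hcVc ht hcone
    (abs_gram_mulVec_sub_le hfeas hxfeas)
  have hweaken : 1 - mu1 A (a - 1) - C * mu1 A (2 * s - 1) ≤
      1 - mu1 A (a - 1) - mu1 A (2 * s - 1) := by nlinarith
  refine sqrt_le_dantzig_bound ha has hC hD hμ hη ht
    (sum_sq_le_of_mul_sum_sq_le ha has hScard hV hc0 hcV hcVc ht hcone hD hX ?_)
  exact (mul_le_mul_of_nonneg_right hweaken (sum_nonneg fun i _ => sq_nonneg _)).trans hkey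

/-- Error bound for the Dantzig selector under the cumulative coherence condition
`μ₁(a−1) + C_{a,s} μ₁(2s−1) < 1` with `C_{a,s} = √((2s−a)/a)`.
Here `S` is any set of indices of the `s` largest-magnitude entries of `x`, so that
`‖x_{−max(s)}‖₁ = ∑_{j ∉ S} |x j|`. -/
theorem stmt4 {m n : ℕ} (A : Matrix (Fin m) (Fin n) ℝ)
    (hA : ∀ j, ∑ k, (A k j) ^ 2 = 1)
    (a s : ℕ) (ha : 1 ≤ a) (has : a ≤ s) (hsn : 2 * s - 1 ≤ n - 1)
    (C : ℝ) (hC : C = Real.sqrt ((2 * (s : ℝ) - a) / a))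
    (hcond : mu1 A (a - 1) + C * mu1 A (2 * s - 1) < 1)
    (η : ℝ) (hη : 0 ≤ η)
    (x : Fin n → ℝ) (z : Fin m → ℝ) (b : Fin m → ℝ)
    (hb : b = A.mulVec x + z)
    (hz : ∀ i, |A.transpose.mulVec z i| ≤ η)
    (xh : Fin n → ℝ)
    (hfeas : ∀ i, |A.transpose.mulVec (b - A.mulVec xh) i| ≤ η)
    (hmin : ∀ y : Fin n → ℝ, (∀ i, |A.transpose.mulVec (b - A.mulVec y) i| ≤ η) →
      ∑ i, |xh i| ≤ ∑ i, |y i|)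
    (S : Finset (Fin n)) (hScard : S.card = s)
    (hSmax : ∀ i ∈ S, ∀ j ∉ S, |x j| ≤ |x i|) :
    Real.sqrt (∑ i, (xh i - x i) ^ 2) ≤
      2 * Real.sqrt 2 * Real.sqrt s / (1 - mu1 A (a - 1) - C * mu1 A (2 * s - 1)) * η +
      (Real.sqrt 2 * ((s : ℝ) / a) * mu1 A (2 * s - 1) /
          ((1 - mu1 A (a - 1) - C * mu1 A (2 * s - 1)) * C) + 1) *
        (2 * (∑ j ∈ Sᶜ, |x j|) / Real.sqrt s) :=
  stmt4_general A hA a s ha has C hC hcond η hη x z b hb hz xh hfeas hmin S hScard
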